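/- arXiv:2206.02767 — 3 statements merged into one kernel-verified Lean document; each statement's English description precedes it below -/
import Mathlib

section
/- For all u, v ∈ V: (i) d_{G,w}(u,v) ≤ d̃^ℓ_{G,w}(u,v); and (ii) if u and v are joined by a path with at most ℓ edges, then d̃^ℓ_{G,w}(u,v) ≤ (1+ε)·d^ℓ_{G,w}(u,v) (in particular d̃^ℓ_{G,w}(u,v) is finite). -/
/-!
Measured in units `c_i = ε·2^i/(2L)`, the rounded weight `w_i` satisfies `w ≤ c_i·w_i < w + c_i` on
every edge. The lower bound gives `d ≤ c_i·d_{w_i}` at every scale, hence `d ≤ d̃`. For a walk `p`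
of `k ≤ L` edges and length `W ≥ k`, the upper bound gives `c_i·w_i(p) ≤ W + k·c_i`. Any `i` with
`W ≤ 2^i` is then admissible, as `w_i(p) ≤ 2^i/c_i + k ≤ (1 + 2/ε)·L`; if `k ≥ 1` then `W ≥ 1`, and
taking also `2^i ≤ 2W` gives `k·c_i ≤ ε·2^i/2 ≤ εW`. If `k = 0`, every term vanishes at `i = 0`.
-/

open scoped ENNReal

/-- The length of a walk with respect to real edge weights (summed as `ℝ≥0∞`
via `ENNReal.ofReal`). -/
noncomputable def wlen {V : Type*} (G : SimpleGraph V) (w : V → V → ℝ) {u v : V}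
    (p : G.Walk u v) : ℝ≥0∞ :=
  (p.darts.map fun d => ENNReal.ofReal (w d.toProd.1 d.toProd.2)).sum

/-- The weighted distance: the infimum of walk lengths (`∞` if `u` and `v` are
not connected, `0` if `u = v`). -/
noncomputable def wdist {V : Type*} (G : SimpleGraph V) (w : V → V → ℝ) (u v : V) : ℝ≥0∞ :=
  ⨅ p : G.Walk u v, wlen G w p

/-- The `L`-hop bounded distance: minimum length over walks with at most `L` edges. -/
noncomputable def hopdist {V : Type*} (G : SimpleGraph V) (w : V → V → ℝ) (L : ℝ)
    (u v : V) : ℝ≥0∞ :=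
  ⨅ (p : G.Walk u v) (_ : (p.length : ℝ) ≤ L), wlen G w p

/-- The rounded weights `w_i(e) = ⌈2L·w(e)/(ε·2^i)⌉` (positive natural numbers, viewed
as real weights). -/
noncomputable def wround {V : Type*} (w : V → V → ℝ) (ε L : ℝ) (i : ℕ) : V → V → ℝ :=
  fun u v => (⌈2 * L * w u v / (ε * 2 ^ i)⌉₊ : ℝ)

/-- The approximate `L`-hop distance `d̃^L_{G,w}(u,v)`: the minimum over integers `i ≥ 0`
with `d_{G,w_i}(u,v) ≤ (1+2/ε)·L` of `d_{G,w_i}(u,v)·ε·2^i/(2L)`, and `∞` if no such `i`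
exists. -/
noncomputable def dtilde {V : Type*} (G : SimpleGraph V) (w : V → V → ℝ) (ε L : ℝ)
    (u v : V) : ℝ≥0∞ :=
  ⨅ (i : ℕ) (_ : wdist G (wround w ε L i) u v ≤ ENNReal.ofReal ((1 + 2 / ε) * L)),
    wdist G (wround w ε L i) u v * ENNReal.ofReal (ε * 2 ^ i / (2 * L))

lemma ENNReal.ofReal_list_sum_of_nonneg {α : Type*} (l : List α) (f : α → ℝ)
    (hf : ∀ x ∈ l, 0 ≤ f x) :
    ENNReal.ofReal (l.map f).sum = (l.map fun x => ENNReal.ofReal (f x)).sum := by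
  induction l with
  | nil => simp
  | cons a t ih =>
    rw [List.forall_mem_cons] at hf
    have ht : 0 ≤ (t.map f).sum := List.sum_nonneg fun x hx => by
      obtain ⟨y, hy, rfl⟩ := List.mem_map.1 hx
      exact hf.2 y hy
    simp only [List.map_cons, List.sum_cons, ih hf.2, ENNReal.ofReal_add hf.1 ht]

section

variable {V : Type*} (G : SimpleGraph V) (w : V → V → ℝ)

noncomputable def wlenReal {u v : V} (p : G.Walk u v) : ℝ :=
  (p.darts.map fun d => w d.toProd.1 d.toProd.2).sum

variable {G w}

lemma wlen_eq_ofReal_wlenReal {u v : V} {p : G.Walk u v}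
    (hw : ∀ d ∈ p.darts, 0 ≤ w d.toProd.1 d.toProd.2) :
    wlen G w p = ENNReal.ofReal (wlenReal G w p) :=
  (ENNReal.ofReal_list_sum_of_nonneg _ _ hw).symm

lemma length_le_wlenReal {u v : V} {p : G.Walk u v}
    (hw : ∀ d ∈ p.darts, 1 ≤ w d.toProd.1 d.toProd.2) :
    (p.length : ℝ) ≤ wlenReal G w p := by
  have := List.sum_le_sum (l := p.darts) (f := fun _ => (1 : ℝ)) hw
  rwa [List.map_const', List.sum_replicate, nsmul_one, p.length_darts] at this

end

section

variable {V : Type*} {w : V → V → ℝ} {ε L : ℝ}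

lemma wround_eq (w : V → V → ℝ) (ε L : ℝ) (i : ℕ) (u v : V) :
    wround w ε L i u v = ⌈w u v / (ε * 2 ^ i / (2 * L))⌉₊ := by
  rw [wround, div_div_eq_mul_div, mul_comm (w u v)]

lemma wround_nonneg (w : V → V → ℝ) (ε L : ℝ) (i : ℕ) (u v : V) : 0 ≤ wround w ε L i u v :=
  Nat.cast_nonneg _

lemma le_wround_mul (hε : 0 < ε) (hL : 0 < L) (i : ℕ) (u v : V) :
    w u v ≤ wround w ε L i u v * (ε * 2 ^ i / (2 * L)) := by
  rw [wround_eq, ← div_le_iff₀ (by positivity)]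
  exact Nat.le_ceil _

lemma wround_lt (hε : 0 ≤ ε) (hL : 0 ≤ L) (i : ℕ) {u v : V} (hw : 0 ≤ w u v) :
    wround w ε L i u v < w u v / (ε * 2 ^ i / (2 * L)) + 1 := by
  rw [wround_eq]
  exact Nat.ceil_lt_add_one (by positivity)

end

section

variable {V : Type*} {G : SimpleGraph V} {w : V → V → ℝ} {ε L : ℝ}

lemma wlen_le_wlen_wround_mul (hε : 0 < ε) (hL : 0 < L) (i : ℕ) {u v : V} (p : G.Walk u v) :
    wlen G w p ≤ wlen G (wround w ε L i) p * ENNReal.ofReal (ε * 2 ^ i / (2 * L)) := by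
  rw [wlen, wlen, ← List.sum_map_mul_right]
  refine List.sum_le_sum fun d _ => ?_
  rw [← ENNReal.ofReal_mul (wround_nonneg w ε L i _ _)]
  exact ENNReal.ofReal_le_ofReal (le_wround_mul hε hL i _ _)

lemma wlenReal_wround_le (hε : 0 ≤ ε) (hL : 0 ≤ L) (i : ℕ) {u v : V} {p : G.Walk u v}
    (hw : ∀ d ∈ p.darts, 0 ≤ w d.toProd.1 d.toProd.2) :
    wlenReal G (wround w ε L i) p ≤ wlenReal G w p / (ε * 2 ^ i / (2 * L)) + p.length := by
  have := List.sum_le_sum fun d hd => (wround_lt hε hL i (hw d hd)).le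
  simp only [div_eq_mul_inv] at this ⊢
  rwa [List.sum_map_add, List.sum_map_mul_right, List.map_const', List.sum_replicate,
    nsmul_one, p.length_darts] at this

lemma wdist_le_wdist_wround_mul (hε : 0 < ε) (hL : 0 < L) (i : ℕ) (u v : V) :
    wdist G w u v ≤ wdist G (wround w ε L i) u v * ENNReal.ofReal (ε * 2 ^ i / (2 * L)) := by
  unfold wdist
  rw [ENNReal.iInf_mul_of_ne (by positivity) ENNReal.ofReal_ne_top]
  exact le_iInf fun p => (iInf_le _ p).trans (wlen_le_wlen_wround_mul hε hL i p)

lemma wdist_le_dtilde (hε : 0 < ε) (hL : 0 < L) (u v : V) :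
    wdist G w u v ≤ dtilde G w ε L u v :=
  le_iInf₂ fun i _ => wdist_le_wdist_wround_mul hε hL i u v

lemma dtilde_le_of_walk (hε : 0 < ε) (hL : 0 < L) {u v : V} {p : G.Walk u v}
    (hw : ∀ d ∈ p.darts, 0 ≤ w d.toProd.1 d.toProd.2) (hp : (p.length : ℝ) ≤ L) {i : ℕ}
    (hi : wlenReal G w p ≤ 2 ^ i) :
    dtilde G w ε L u v ≤ ENNReal.ofReal (wlenReal G w p + p.length * (ε * 2 ^ i / (2 * L))) := by
  set c := ε * 2 ^ i / (2 * L) with hc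
  have hc0 : 0 < c := by positivity
  have hround : wdist G (wround w ε L i) u v ≤ ENNReal.ofReal (wlenReal G w p / c + p.length) :=
    calc wdist G (wround w ε L i) u v ≤ wlen G (wround w ε L i) p := iInf_le _ p
      _ = ENNReal.ofReal (wlenReal G (wround w ε L i) p) :=
        wlen_eq_ofReal_wlenReal fun _ _ => wround_nonneg w ε L i _ _
      _ ≤ _ := ENNReal.ofReal_le_ofReal (wlenReal_wround_le hε.le hL.le i hw)
  have hadmissible : wdist G (wround w ε L i) u v ≤ ENNReal.ofReal ((1 + 2 / ε) * L) := by
    refine hround.trans (ENNReal.ofReal_le_ofReal ?_)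
    have hscaled : wlenReal G w p / c ≤ 2 * L / ε :=
      calc wlenReal G w p / c ≤ 2 ^ i / c := by gcongr
        _ = 2 * L / ε := by rw [hc]; field_simp
    linarith [show (1 + 2 / ε) * L = L + 2 * L / ε by ring]
  calc dtilde G w ε L u v ≤ wdist G (wround w ε L i) u v * ENNReal.ofReal c :=
        iInf₂_le i hadmissible
    _ ≤ ENNReal.ofReal (wlenReal G w p / c + p.length) * ENNReal.ofReal c := by gcongr
    _ = ENNReal.ofReal (wlenReal G w p + p.length * c) := by
      rw [← ENNReal.ofReal_mul' hc0.le, add_mul, div_mul_cancel₀ _ hc0.ne']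

lemma dtilde_le_mul_wlen (hε : 0 < ε) (hL : 0 < L) {u v : V} {p : G.Walk u v}
    (hw : ∀ d ∈ p.darts, 1 ≤ w d.toProd.1 d.toProd.2) (hp : (p.length : ℝ) ≤ L) :
    dtilde G w ε L u v ≤ ENNReal.ofReal (1 + ε) * wlen G w p := by
  have hw0 : ∀ d ∈ p.darts, 0 ≤ w d.toProd.1 d.toProd.2 := fun d hd => zero_le_one.trans (hw d hd)
  rw [wlen_eq_ofReal_wlenReal hw0, ← ENNReal.ofReal_mul (by linarith)]
  rcases eq_or_ne p.length 0 with h0 | h0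
  · have hW : wlenReal G w p = 0 := by
      simp [wlenReal, List.length_eq_zero_iff.1 (p.length_darts.trans h0)]
    simpa [hW, h0] using dtilde_le_of_walk hε hL hw0 hp (i := 0) (hW.le.trans zero_le_one)
  · have hW : 1 ≤ wlenReal G w p := (Nat.one_le_cast.2 (Nat.one_le_iff_ne_zero.2 h0)).trans
      (length_le_wlenReal hw)
    obtain ⟨n, hn, hn'⟩ := exists_nat_pow_near hW one_lt_two
    refine (dtilde_le_of_walk hε hL hw0 hp hn'.le).trans (ENNReal.ofReal_le_ofReal ?_)
    calc wlenReal G w p + p.length * (ε * 2 ^ (n + 1) / (2 * L))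
        ≤ wlenReal G w p + L * (ε * 2 ^ (n + 1) / (2 * L)) := by gcongr
      _ = wlenReal G w p + ε * 2 ^ n := by field_simp; ring
      _ ≤ (1 + ε) * wlenReal G w p := by nlinarith

lemma dtilde_le_mul_hopdist (hε : 0 < ε) (hL : 0 < L) (hw : ∀ u v, G.Adj u v → 1 ≤ w u v)
    (u v : V) : dtilde G w ε L u v ≤ ENNReal.ofReal (1 + ε) * hopdist G w L u v := by
  have h0 : ENNReal.ofReal (1 + ε) ≠ 0 := (ENNReal.ofReal_pos.2 (by linarith)).ne'
  unfold hopdist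
  rw [ENNReal.mul_iInf_of_ne h0 ENNReal.ofReal_ne_top]
  refine le_iInf fun p => ?_
  rw [ENNReal.mul_iInf_of_ne h0 ENNReal.ofReal_ne_top]
  exact le_iInf fun hp => dtilde_le_mul_wlen hε hL (fun d _ => hw _ _ d.adj) hp

end

theorem stmt0_general {V : Type*} (G : SimpleGraph V) (w : V → V → ℝ)
    (hw : ∀ u v, G.Adj u v → 1 ≤ w u v)
    (ε : ℝ) (hε : 0 < ε) (ℓ : ℕ) (hℓ : 1 ≤ ℓ) (u v : V) :
    wdist G w u v ≤ dtilde G w ε (ℓ : ℝ) u v ∧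
    ((∃ p : G.Walk u v, p.length ≤ ℓ) →
      dtilde G w ε (ℓ : ℝ) u v ≤ ENNReal.ofReal (1 + ε) * hopdist G w (ℓ : ℝ) u v ∧
      dtilde G w ε (ℓ : ℝ) u v ≠ ⊤) := by
  have hL : (0 : ℝ) < ℓ := by exact_mod_cast hℓ
  have hwp {p : G.Walk u v} : ∀ d ∈ p.darts, 1 ≤ w d.toProd.1 d.toProd.2 := fun d _ => hw _ _ d.adj
  refine ⟨wdist_le_dtilde hε hL u v, fun ⟨p, hp⟩ => ⟨dtilde_le_mul_hopdist hε hL hw u v, ?_⟩⟩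
  have hfin := dtilde_le_mul_wlen hε hL hwp (by exact_mod_cast hp : (p.length : ℝ) ≤ ℓ)
  rw [wlen_eq_ofReal_wlenReal fun d hd => zero_le_one.trans (hwp d hd)] at hfin
  exact ne_top_of_le_ne_top (ENNReal.mul_ne_top ENNReal.ofReal_ne_top ENNReal.ofReal_ne_top) hfin

/-- For all `u, v ∈ V`: (i) `d_{G,w}(u,v) ≤ d̃^ℓ_{G,w}(u,v)`; and
(ii) if `u` and `v` are joined by a path with at most `ℓ` edges, then
`d̃^ℓ_{G,w}(u,v) ≤ (1+ε)·d^ℓ_{G,w}(u,v)`; in particular `d̃^ℓ_{G,w}(u,v)` is finite. -/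
theorem stmt0 {V : Type*} [Fintype V] (G : SimpleGraph V) (w : V → V → ℝ)
    (hsymm : ∀ u v, w u v = w v u) (hw : ∀ u v, G.Adj u v → 1 ≤ w u v)
    (ε : ℝ) (hε : 0 < ε) (ℓ : ℕ) (hℓ : 1 ≤ ℓ) (u v : V) :
    wdist G w u v ≤ dtilde G w ε (ℓ : ℝ) u v ∧
    ((∃ p : G.Walk u v, p.length ≤ ℓ) →
      dtilde G w ε (ℓ : ℝ) u v ≤ ENNReal.ofReal (1 + ε) * hopdist G w (ℓ : ℝ) u v ∧
      dtilde G w ε (ℓ : ℝ) u v ≠ ⊤) :=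
  stmt0_general G w hw ε hε ℓ hℓ u v
end

section
/- Suppose s ∈ S and v ∈ V are such that there exist m ≥ 1 and pairwise distinct vertices s = s_1, s_2, …, s_m ∈ S with d_{G,w}(s,v) = Σ_{i=2}^{m} d_{G,w}(s_{i−1},s_i) + d_{G,w}(s_m,v), such that for each i ∈ [2,m] some minimum-length path in (G,w) between s_{i−1} and s_i has at most ℓ edges, some minimum-length path in (G,w) between s_m and v has at most ℓ edges, and some minimum-w''_S-length path in (G''_S,w''_S) between s and s_m has at most 4|S|/k edges. Then d̃_{G,w,S}(s,v) ≤ (1+ε)²·d_{G,w}(s,v). -/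
open scoped ENNReal

/-- The weights `w'_S({u,v}) = d̃^ℓ_{G,w}(u,v)` of the complete graph `(G'_S, w'_S)` on `S`
(as real numbers; the relevant values are assumed finite). -/
noncomputable def skelW {V : Type*} (G : SimpleGraph V) (w : V → V → ℝ) (ε : ℝ) (ℓ : ℕ)
    (S : Finset V) : {x // x ∈ S} → {x // x ∈ S} → ℝ :=
  fun u v => (dtilde G w ε (ℓ : ℝ) (u : V) (v : V)).toReal

/-- The weights `w''_S` of the `k`-shortcut graph `(G''_S, w''_S)` on `S`:
`w''_S({u,v}) = d_{G'_S,w'_S}(u,v)` if `u ∈ N^k_S(v)` or `v ∈ N^k_S(u)`, and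
`w''_S({u,v}) = w'_S({u,v})` otherwise. -/
noncomputable def skelW2 {V : Type*} [DecidableEq V] (G : SimpleGraph V) (w : V → V → ℝ)
    (ε : ℝ) (ℓ : ℕ) (S : Finset V) (N : {x // x ∈ S} → Finset {x // x ∈ S}) :
    {x // x ∈ S} → {x // x ∈ S} → ℝ :=
  fun u v => if u ∈ N v ∨ v ∈ N u
    then (wdist (⊤ : SimpleGraph {x // x ∈ S}) (skelW G w ε ℓ S) u v).toReal
    else skelW G w ε ℓ S u v

/-- The approximate distance
`d̃_{G,w,S}(s,v) = min_{u ∈ S} ( d̃^{4|S|/k}_{G''_S,w''_S}(s,u) + d̃^ℓ_{G,w}(u,v) )`. -/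
noncomputable def approxDist {V : Type*} [DecidableEq V] (G : SimpleGraph V)
    (w : V → V → ℝ) (ε : ℝ) (ℓ : ℕ) (S : Finset V) (k : ℕ)
    (N : {x // x ∈ S} → Finset {x // x ∈ S}) (s : {x // x ∈ S}) (v : V) : ℝ≥0∞ :=
  ⨅ u : {x // x ∈ S},
    dtilde (⊤ : SimpleGraph {x // x ∈ S}) (skelW2 G w ε ℓ S N) ε
        (4 * (S.card : ℝ) / (k : ℝ)) s u +
      dtilde G w ε (ℓ : ℝ) (u : V) v

/-!
The chain `s = s_1, …, s_m` is a walk in the complete graph on `S`, and each of its edges has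
`w''_S`-weight at most `w'_S = d̃^ℓ`, which is within a factor `1 + ε` of `d_{G,w}` on that hop
since the hop is realized by a shortest path with at most `ℓ` edges. Hence
`d_{G''_S}(s, s_m) ≤ (1 + ε) Σ d_{G,w}(s_{i-1}, s_i)`. The `4|S|/k`-hop shortest path from `s` to
`s_m` in `G''_S` and the `ℓ`-hop shortest path from `s_m` to `v` each lose another factor `1 + ε`
under `d̃`, and `u = s_m` is a candidate in the minimum defining `d̃_{G,w,S}(s, v)`.
-/

open SimpleGraph Finset

section WeightedWalks

variable {V : Type*} {G : SimpleGraph V} {w : V → V → ℝ} {u v : V}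

@[simp]
lemma wlen_nil : wlen G w (Walk.nil : G.Walk u u) = 0 := by
  simp [wlen]

@[simp]
lemma wlen_cons {x : V} (h : G.Adj u x) (p : G.Walk x v) :
    wlen G w (Walk.cons h p) = ENNReal.ofReal (w u x) + wlen G w p := by
  simp [wlen]

lemma wlen_append {x : V} (p : G.Walk u x) (q : G.Walk x v) :
    wlen G w (p.append q) = wlen G w p + wlen G w q := by
  simp [wlen, Walk.darts_append]

lemma wlen_ne_top (p : G.Walk u v) : wlen G w p ≠ ⊤ := by
  induction p with
  | nil => simp
  | cons h p ih => simpa using ih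

lemma natCast_length_le_wlen (hw : ∀ a b, G.Adj a b → 1 ≤ w a b) (p : G.Walk u v) :
    (p.length : ℝ≥0∞) ≤ wlen G w p := by
  induction p with
  | nil => simp
  | cons h p ih =>
    rw [wlen_cons, Walk.length_cons, Nat.cast_succ, add_comm]
    exact add_le_add (ENNReal.one_le_ofReal.2 (hw _ _ h)) ih

lemma wdist_le_wlen (p : G.Walk u v) : wdist G w u v ≤ wlen G w p :=
  iInf_le _ p

@[simp]
lemma wdist_self (u : V) : wdist G w u u = 0 :=
  le_antisymm ((wdist_le_wlen Walk.nil).trans_eq wlen_nil) zero_le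

lemma wdist_triangle (u x v : V) : wdist G w u v ≤ wdist G w u x + wdist G w x v := by
  simp only [wdist, ENNReal.iInf_add, ENNReal.add_iInf]
  exact le_iInf₂ fun q p => (wdist_le_wlen (p.append q)).trans_eq (wlen_append p q)

lemma ofReal_le_wdist {c : ℝ} (hw : ∀ a b, G.Adj a b → c ≤ w a b) (huv : u ≠ v) :
    ENNReal.ofReal c ≤ wdist G w u v := by
  refine le_iInf fun p => ?_
  cases p with
  | nil => exact absurd rfl huv
  | cons h q => exact (ENNReal.ofReal_le_ofReal (hw _ _ h)).trans (by simp)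

lemma wdist_le_ofReal_of_adj (h : G.Adj u v) : wdist G w u v ≤ ENNReal.ofReal (w u v) :=
  (wdist_le_wlen (Walk.cons h Walk.nil)).trans_eq (by simp)

lemma wdist_top_le_ofReal (w : V → V → ℝ) (u v : V) :
    wdist (⊤ : SimpleGraph V) w u v ≤ ENNReal.ofReal (w u v) := by
  obtain rfl | huv := eq_or_ne u v
  · simp
  · exact wdist_le_ofReal_of_adj huv

end WeightedWalks

section ApproximateHopDistance

variable {V : Type*} {G : SimpleGraph V} {w : V → V → ℝ} {ε L : ℝ} {u v : V}

lemma exists_two_pow_mem_Icc {D : ℝ} (hD : 1 ≤ D) : ∃ i : ℕ, D ≤ 2 ^ i ∧ (2 : ℝ) ^ i ≤ 2 * D := by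
  obtain ⟨n, hn, hn'⟩ := exists_nat_pow_near hD one_lt_two
  exact ⟨n + 1, hn'.le, by rw [pow_succ']; linarith⟩

lemma ofReal_wround_le (hε : 0 < ε) (hL : 0 ≤ L) (i : ℕ) {a b : V} (hab : 0 ≤ w a b) :
    ENNReal.ofReal (wround w ε L i a b) ≤
      ENNReal.ofReal (2 * L / (ε * 2 ^ i)) * ENNReal.ofReal (w a b) + 1 := by
  have hx : 0 ≤ 2 * L * w a b / (ε * 2 ^ i) := by positivity
  rw [← ENNReal.ofReal_mul (by positivity), ← ENNReal.ofReal_one,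
    ← ENNReal.ofReal_add (by positivity) zero_le_one]
  refine ENNReal.ofReal_le_ofReal ?_
  rw [wround, ← mul_div_right_comm]
  exact (Nat.ceil_lt_add_one hx).le

lemma wlen_wround_le (hw : ∀ a b, G.Adj a b → 0 ≤ w a b) (hε : 0 < ε) (hL : 0 ≤ L) (i : ℕ)
    (p : G.Walk u v) :
    wlen G (wround w ε L i) p ≤
      ENNReal.ofReal (2 * L / (ε * 2 ^ i)) * wlen G w p + p.length := by
  induction p with
  | nil => simp
  | cons h p ih =>
    rw [wlen_cons, wlen_cons, Walk.length_cons, Nat.cast_succ, mul_add]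
    calc _ ≤ (ENNReal.ofReal (2 * L / (ε * 2 ^ i)) * ENNReal.ofReal (w _ _) + 1) +
          (ENNReal.ofReal (2 * L / (ε * 2 ^ i)) * wlen G w p + p.length) :=
          add_le_add (ofReal_wround_le hε hL i (hw _ _ h)) ih
      _ = _ := by ring

@[simp]
lemma dtilde_self (u : V) : dtilde G w ε L u u = 0 :=
  le_antisymm ((iInf₂_le 0 (by simp)).trans_eq (by simp)) zero_le

lemma dtilde_le_of_wdist_le {i : ℕ} {R : ℝ} (hR0 : 0 ≤ R)
    (hR : wdist G (wround w ε L i) u v ≤ ENNReal.ofReal R) (hRL : R ≤ (1 + 2 / ε) * L) :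
    dtilde G w ε L u v ≤ ENNReal.ofReal (R * (ε * 2 ^ i / (2 * L))) := by
  refine (iInf₂_le i (hR.trans (ENNReal.ofReal_le_ofReal hRL))).trans ?_
  rw [ENNReal.ofReal_mul hR0]
  exact mul_le_mul_left hR _

lemma one_le_dtilde (hw : ∀ a b, G.Adj a b → 1 ≤ w a b) (hε : 0 < ε) (hL : 0 < L)
    (huv : u ≠ v) : 1 ≤ dtilde G w ε L u v := by
  refine le_iInf₂ fun i _ => ?_
  have hround : ENNReal.ofReal (2 * L / (ε * 2 ^ i)) ≤ wdist G (wround w ε L i) u v := by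
    refine ofReal_le_wdist (fun a b hab => ?_) huv
    calc 2 * L / (ε * 2 ^ i) ≤ 2 * L * w a b / (ε * 2 ^ i) :=
          div_le_div_of_nonneg_right (le_mul_of_one_le_right (by positivity) (hw a b hab))
            (by positivity)
      _ ≤ _ := Nat.le_ceil _
  calc (1 : ℝ≥0∞)
      = ENNReal.ofReal (2 * L / (ε * 2 ^ i)) * ENNReal.ofReal (ε * 2 ^ i / (2 * L)) := by
        rw [← ENNReal.ofReal_mul (by positivity),
          show 2 * L / (ε * 2 ^ i) * (ε * 2 ^ i / (2 * L)) = 1 by field_simp, ENNReal.ofReal_one]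
    _ ≤ _ := mul_le_mul_left hround _

/-- Take the scale `2 ^ i ∈ [D, 2D]`, `D` the length of `p`: rounding up adds at most one unit
per edge, so at most `L · ε 2 ^ i / (2L) ≤ ε D` in total, and the rounded length stays below
`(1 + 2 / ε) L`. -/
theorem dtilde_le_of_walk_s12 (hw : ∀ a b, G.Adj a b → 1 ≤ w a b) (hε : 0 < ε)
    (p : G.Walk u v) (hlen : (p.length : ℝ) ≤ L) (hmin : wlen G w p = wdist G w u v) :
    dtilde G w ε L u v ≤ ENNReal.ofReal (1 + ε) * wdist G w u v := by
  obtain h0 | hpos := p.length.eq_zero_or_pos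
  · obtain rfl := Walk.eq_of_length_eq_zero h0
    simp
  set D := (wlen G w p).toReal
  have hD : wlen G w p = ENNReal.ofReal D := (ENNReal.ofReal_toReal (wlen_ne_top p)).symm
  have hD1 : 1 ≤ D := by
    have := ENNReal.toReal_mono (wlen_ne_top p) (natCast_length_le_wlen hw p)
    rw [ENNReal.toReal_natCast] at this
    exact le_trans (by exact_mod_cast hpos) this
  have hL : 0 < L := lt_of_lt_of_le (by exact_mod_cast hpos) hlen
  obtain ⟨i, hDi, hiD⟩ := exists_two_pow_mem_Icc hD1
  set A := 2 * L / (ε * 2 ^ i) with hA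
  have hround : wdist G (wround w ε L i) u v ≤ ENNReal.ofReal (A * D + L) := by
    calc _ ≤ wlen G (wround w ε L i) p := wdist_le_wlen p
      _ ≤ ENNReal.ofReal A * wlen G w p + p.length :=
        wlen_wround_le (fun a b h => zero_le_one.trans (hw a b h)) hε hL.le i p
      _ ≤ ENNReal.ofReal (A * D + L) := by
        rw [hD, ← ENNReal.ofReal_mul (by positivity), ← ENNReal.ofReal_natCast,
          ← ENNReal.ofReal_add (by positivity) (by positivity)]
        exact ENNReal.ofReal_le_ofReal (by linarith)
  have hAD : A * D ≤ 2 * L / ε := by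
    calc A * D ≤ A * 2 ^ i := by gcongr
      _ = 2 * L / ε := by rw [hA]; field_simp
  calc dtilde G w ε L u v ≤ ENNReal.ofReal ((A * D + L) * (ε * 2 ^ i / (2 * L))) :=
        dtilde_le_of_wdist_le (by positivity) hround
          (by linarith [show (1 + 2 / ε) * L = L + 2 * L / ε by ring])
    _ ≤ ENNReal.ofReal ((1 + ε) * D) := by
        refine ENNReal.ofReal_le_ofReal ?_
        have : (A * D + L) * (ε * 2 ^ i / (2 * L)) = D + ε * 2 ^ i / 2 := by
          rw [hA]; field_simp
        linarith [mul_le_mul_of_nonneg_left hiD hε.le]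
    _ = ENNReal.ofReal (1 + ε) * wdist G w u v := by
        rw [ENNReal.ofReal_mul (by linarith), ← hD, hmin]

end ApproximateHopDistance

section Skeleton

variable {V : Type*} {G : SimpleGraph V} {w : V → V → ℝ} {ε : ℝ} {ℓ : ℕ}
  {S : Finset V} {N : {x // x ∈ S} → Finset {x // x ∈ S}}

lemma ofReal_skelW {a b : {x // x ∈ S}} (hfin : dtilde G w ε ℓ a b ≠ ⊤) :
    ENNReal.ofReal (skelW G w ε ℓ S a b) = dtilde G w ε ℓ a b :=
  ENNReal.ofReal_toReal hfin

variable [DecidableEq V]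

lemma ofReal_skelW2_le_dtilde {a b : {x // x ∈ S}} (hfin : dtilde G w ε ℓ a b ≠ ⊤) :
    ENNReal.ofReal (skelW2 G w ε ℓ S N a b) ≤ dtilde G w ε ℓ a b := by
  rw [← ofReal_skelW hfin, skelW2]
  split_ifs
  · exact ENNReal.ofReal_toReal_le.trans (wdist_top_le_ofReal _ a b)
  · exact le_rfl

lemma one_le_skelW2 (hw : ∀ a b, G.Adj a b → 1 ≤ w a b) (hε : 0 < ε) (hℓ : 1 ≤ ℓ)
    (hfin : ∀ a b : {x // x ∈ S}, dtilde G w ε ℓ a b ≠ ⊤) {a b : {x // x ∈ S}} (hab : a ≠ b) :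
    1 ≤ skelW2 G w ε ℓ S N a b := by
  have hskel : ∀ {a b : {x // x ∈ S}}, a ≠ b → 1 ≤ skelW G w ε ℓ S a b := fun {a b} hab =>
    ENNReal.one_le_ofReal.1 <| (ofReal_skelW (hfin a b)).symm ▸
      one_le_dtilde hw hε (by exact_mod_cast hℓ) (Subtype.coe_injective.ne hab)
  rw [skelW2]
  split_ifs
  · have hle : wdist (⊤ : SimpleGraph {x // x ∈ S}) (skelW G w ε ℓ S) a b ≠ ⊤ :=
      ne_top_of_le_ne_top ENNReal.ofReal_ne_top (wdist_top_le_ofReal _ a b)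
    exact ENNReal.toReal_one ▸ ENNReal.toReal_mono hle
      (ENNReal.ofReal_one ▸ ofReal_le_wdist (fun _ _ h => hskel h.ne) hab)
  · exact hskel hab

lemma wdist_skelW2_le_sum_dtilde (hfin : ∀ a b : {x // x ∈ S}, dtilde G w ε ℓ a b ≠ ⊤)
    {σ : ℕ → V} {n : ℕ} (hσS : ∀ i ≤ n, σ i ∈ S) :
    wdist (⊤ : SimpleGraph {x // x ∈ S}) (skelW2 G w ε ℓ S N)
        ⟨σ 0, hσS 0 n.zero_le⟩ ⟨σ n, hσS n le_rfl⟩ ≤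
      ∑ i ∈ range n, dtilde G w ε ℓ (σ i) (σ (i + 1)) := by
  induction n with
  | zero => simp
  | succ n ih =>
    rw [sum_range_succ]
    calc _ ≤ _ := wdist_triangle _ ⟨σ n, hσS n n.le_succ⟩ _
      _ ≤ _ := add_le_add (ih fun i hi => hσS i (hi.trans n.le_succ))
          ((wdist_top_le_ofReal _ _ _).trans (ofReal_skelW2_le_dtilde (hfin _ _)))

end Skeleton

theorem stmt12_general {V : Type*} [DecidableEq V]
    (G : SimpleGraph V)
    (w : V → V → ℝ) (hge1 : ∀ u v, G.Adj u v → 1 ≤ w u v)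
    (ε : ℝ) (hε : 0 < ε) (ℓ : ℕ) (hℓ : 1 ≤ ℓ)
    (S : Finset V) (k : ℕ)
    (hfin : ∀ u v : {x // x ∈ S}, dtilde G w ε (ℓ : ℝ) (u : V) (v : V) ≠ ⊤)
    (N : {x // x ∈ S} → Finset {x // x ∈ S})
    (s : {x // x ∈ S}) (v : V)
    (m : ℕ) (hm : 1 ≤ m) (σ : ℕ → V)
    (hσ0 : σ 0 = (s : V))
    (hσS : ∀ i < m, σ i ∈ S)
    (hdecomp : wdist G w (s : V) v =
      (∑ i ∈ Finset.range (m - 1), wdist G w (σ i) (σ (i + 1))) + wdist G w (σ (m - 1)) v)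
    (hhop : ∀ i, i + 1 < m → ∃ p : G.Walk (σ i) (σ (i + 1)),
      wlen G w p = wdist G w (σ i) (σ (i + 1)) ∧ p.length ≤ ℓ)
    (htail : ∃ p : G.Walk (σ (m - 1)) v,
      wlen G w p = wdist G w (σ (m - 1)) v ∧ p.length ≤ ℓ)
    (hshort : ∃ p : (⊤ : SimpleGraph {x // x ∈ S}).Walk s
        ⟨σ (m - 1), hσS (m - 1) (Nat.sub_lt hm Nat.one_pos)⟩,
      wlen (⊤ : SimpleGraph {x // x ∈ S}) (skelW2 G w ε ℓ S N) p =
        wdist (⊤ : SimpleGraph {x // x ∈ S}) (skelW2 G w ε ℓ S N) s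
          ⟨σ (m - 1), hσS (m - 1) (Nat.sub_lt hm Nat.one_pos)⟩ ∧
      (p.length : ℝ) ≤ 4 * (S.card : ℝ) / (k : ℝ)) :
    approxDist G w ε ℓ S k N s v ≤
      ENNReal.ofReal ((1 + ε) ^ 2) * wdist G w (s : V) v := by
  set t : {x // x ∈ S} := ⟨σ (m - 1), hσS (m - 1) (Nat.sub_lt hm Nat.one_pos)⟩
  obtain ⟨q, hq, hqlen⟩ := hshort
  obtain ⟨p, hp, hplen⟩ := htail
  set E := ENNReal.ofReal (1 + ε)
  have hs : s = ⟨σ 0, hσS 0 hm⟩ := Subtype.ext hσ0.symm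
  have hskel : wdist (⊤ : SimpleGraph {x // x ∈ S}) (skelW2 G w ε ℓ S N) s t ≤
      E * ∑ i ∈ range (m - 1), wdist G w (σ i) (σ (i + 1)) := by
    rw [hs, mul_sum]
    refine (wdist_skelW2_le_sum_dtilde hfin fun i hi => hσS i (by omega)).trans
      (sum_le_sum fun i hi => ?_)
    obtain ⟨p, hp, hplen⟩ := hhop i (by rw [mem_range] at hi; omega)
    exact dtilde_le_of_walk_s12 hge1 hε p (by exact_mod_cast hplen) hp
  have hw'' : ∀ a b, (⊤ : SimpleGraph {x // x ∈ S}).Adj a b → 1 ≤ skelW2 G w ε ℓ S N a b :=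
    fun a b h => one_le_skelW2 hge1 hε hℓ hfin h.ne
  have hE : 1 ≤ E := ENNReal.one_le_ofReal.2 (by linarith)
  calc approxDist G w ε ℓ S k N s v
      ≤ dtilde ⊤ (skelW2 G w ε ℓ S N) ε (4 * S.card / k) s t +
          dtilde G w ε ℓ (σ (m - 1)) v := iInf_le _ t
    _ ≤ E * (E * ∑ i ∈ range (m - 1), wdist G w (σ i) (σ (i + 1))) +
          E * wdist G w (σ (m - 1)) v :=
        add_le_add
          ((dtilde_le_of_walk_s12 hw'' hε q hqlen hq).trans (mul_le_mul_right hskel _))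
          (dtilde_le_of_walk_s12 hge1 hε p (by exact_mod_cast hplen) hp)
    _ ≤ E * E * (∑ i ∈ range (m - 1), wdist G w (σ i) (σ (i + 1))) +
          E * E * wdist G w (σ (m - 1)) v := by
        rw [← mul_assoc]
        gcongr
        exact le_mul_of_one_le_left' hE
    _ = ENNReal.ofReal ((1 + ε) ^ 2) * wdist G w s v := by
        rw [hdecomp, mul_add, sq, ENNReal.ofReal_mul (by linarith)]

/-- Suppose `s ∈ S` and `v ∈ V` are such that there exist `m ≥ 1` and
pairwise distinct vertices `s = s_1, …, s_m ∈ S` (here `σ 0, …, σ (m-1)`) with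
`d_{G,w}(s,v) = Σ_{i=2}^m d_{G,w}(s_{i−1},s_i) + d_{G,w}(s_m,v)`, such that each
consecutive pair is joined by a minimum-length path with at most `ℓ` edges, `s_m` and `v`
are joined by a minimum-length path with at most `ℓ` edges, and `s` and `s_m` are joined
in `(G''_S,w''_S)` by a minimum-`w''_S`-length path with at most `4|S|/k` edges.  Then
`d̃_{G,w,S}(s,v) ≤ (1+ε)²·d_{G,w}(s,v)`. -/
theorem stmt12 {V : Type*} [Fintype V] [DecidableEq V]
    (G : SimpleGraph V) (hconn : G.Connected)
    (w : V → V → ℝ) (hsymm : ∀ u v, w u v = w v u) (hge1 : ∀ u v, G.Adj u v → 1 ≤ w u v)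
    (ε : ℝ) (hε : 0 < ε) (ℓ : ℕ) (hℓ : 1 ≤ ℓ)
    (S : Finset V) (k : ℕ) (hk1 : 1 ≤ k) (hk2 : k ≤ S.card - 1)
    (hfin : ∀ u v : {x // x ∈ S}, dtilde G w ε (ℓ : ℝ) (u : V) (v : V) ≠ ⊤)
    (N : {x // x ∈ S} → Finset {x // x ∈ S})
    (hNself : ∀ v, v ∉ N v) (hNcard : ∀ v, (N v).card = k)
    (hNnear : ∀ v, ∀ u ∈ N v, ∀ z, z ∉ N v → z ≠ v →
      wdist (⊤ : SimpleGraph {x // x ∈ S}) (skelW G w ε ℓ S) v u ≤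
        wdist (⊤ : SimpleGraph {x // x ∈ S}) (skelW G w ε ℓ S) v z)
    (s : {x // x ∈ S}) (v : V)
    (m : ℕ) (hm : 1 ≤ m) (σ : ℕ → V)
    (hσ0 : σ 0 = (s : V))
    (hσS : ∀ i < m, σ i ∈ S)
    (hσinj : ∀ i < m, ∀ j < m, σ i = σ j → i = j)
    (hdecomp : wdist G w (s : V) v =
      (∑ i ∈ Finset.range (m - 1), wdist G w (σ i) (σ (i + 1))) + wdist G w (σ (m - 1)) v)
    (hhop : ∀ i, i + 1 < m → ∃ p : G.Walk (σ i) (σ (i + 1)),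
      wlen G w p = wdist G w (σ i) (σ (i + 1)) ∧ p.length ≤ ℓ)
    (htail : ∃ p : G.Walk (σ (m - 1)) v,
      wlen G w p = wdist G w (σ (m - 1)) v ∧ p.length ≤ ℓ)
    (hshort : ∃ p : (⊤ : SimpleGraph {x // x ∈ S}).Walk s
        ⟨σ (m - 1), hσS (m - 1) (Nat.sub_lt hm Nat.one_pos)⟩,
      wlen (⊤ : SimpleGraph {x // x ∈ S}) (skelW2 G w ε ℓ S N) p =
        wdist (⊤ : SimpleGraph {x // x ∈ S}) (skelW2 G w ε ℓ S N) s
          ⟨σ (m - 1), hσS (m - 1) (Nat.sub_lt hm Nat.one_pos)⟩ ∧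
      (p.length : ℝ) ≤ 4 * (S.card : ℝ) / (k : ℝ)) :
    approxDist G w ε ℓ S k N s v ≤
      ENNReal.ofReal ((1 + ε) ^ 2) * wdist G w (s : V) v :=
  stmt12_general G w hge1 ε hε ℓ hℓ S k hfin N s v m hm σ hσ0 hσS hdecomp hhop htail hshort
end

section
/- The unweighted diameter D_G of the underlying (unweighted) graph G of the diameter gadget satisfies h ≤ D_G ≤ 2h + 6. -/
set_option linter.unusedVariables false

/-- Vertices of the diameter gadget. -/
inductive GV (h s ℓ : ℕ) where
  /-- tree node `t_{i,j}` encoded in heap order: `t m` is the tree node numbered `m+1`,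
  i.e. the node of depth `i` and position `j` with `m + 1 = 2^i + (j-1)`. -/
  | t (m : Fin (2 ^ (h + 1) - 1))
  /-- path node `p_{i+1, j+1}` -/
  | p (i : Fin (2 * s + ℓ)) (j : Fin (2 ^ h))
  /-- node `a_{i+1}` -/
  | a (i : Fin (2 ^ s))
  /-- node `b_{i+1}` -/
  | b (i : Fin (2 ^ s))
  /-- node `a^z_{j+1}` -/
  | ah (z : Bool) (j : Fin s)
  /-- node `b^z_{j+1}` -/
  | bh (z : Bool) (j : Fin s)
  /-- node `a*_{j+1}` -/
  | as (j : Fin ℓ)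
  /-- node `b*_{j+1}` -/
  | bs (j : Fin ℓ)
  deriving DecidableEq, Fintype

/-- Base (oriented) adjacency of the diameter gadget.  Here `bin(i,j)` is realized as
`Nat.testBit` on the 0-based index. -/
def gadgetAdj0 {h s ℓ : ℕ} : GV h s ℓ → GV h s ℓ → Prop
  | .t m, .t m' => 1 ≤ m.val ∧ m'.val + 1 = (m.val + 1) / 2
  | .t m, .p _ j => m.val + 1 = 2 ^ h + j.val
  | .p i j, .p i' j' => i = i' ∧ j.val = j'.val + 1
  | .ah z jj, .p i j => i.val = 2 * jj.val + (if z then 1 else 0) ∧ j.val = 0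
  | .bh z jj, .p i j => i.val = 2 * jj.val + (if z then 0 else 1) ∧ j.val = 2 ^ h - 1
  | .as jj, .p i j => i.val = 2 * s + jj.val ∧ j.val = 0
  | .bs jj, .p i j => i.val = 2 * s + jj.val ∧ j.val = 2 ^ h - 1
  | .a i, .ah z j => z = i.val.testBit j.val
  | .b i, .bh z j => z = i.val.testBit j.val
  | .a i, .a i' => i ≠ i'
  | .b i, .b i' => i ≠ i'
  | .a _, .as _ => True
  | .b _, .bs _ => True
  | _, _ => False

/-- The (underlying, unweighted) diameter gadget graph. -/
def gadget (h s ℓ : ℕ) : SimpleGraph (GV h s ℓ) where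
  Adj u v := u ≠ v ∧ (gadgetAdj0 u v ∨ gadgetAdj0 v u)
  symm := ⟨fun u v huv => ⟨huv.1.symm, huv.2.symm⟩⟩
  loopless := ⟨fun u hu => hu.1 rfl⟩

/-!
Every vertex `v` lies at distance exactly `depth v` from the root `t_{0,1}`, where the depth of
`t_{i,j}` is `i`, path nodes have depth `h + 1`, the nodes `a^z_j, b^z_j, a*_j, b*_j` depth
`h + 2` and `a_i, b_i` depth `h + 3`: the depth changes by at most one along an edge, and every
vertex other than the root has a neighbour of smaller depth. Hence the eccentricity of the root
is `h + 3`, which bounds the diameter below by `h + 3` and above by `2 (h + 3)`.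
-/

namespace SimpleGraph

variable {V : Type*} {G : SimpleGraph V} {f : V → ℕ}

theorem Walk.apply_le_apply_add_length (hf : ∀ ⦃u v⦄, G.Adj u v → f v ≤ f u + 1)
    {u v : V} (p : G.Walk u v) : f v ≤ f u + p.length := by
  induction p with
  | nil => simp
  | cons hadj _ ih =>
    have := hf hadj
    simp only [Walk.length_cons]
    omega

theorem apply_le_apply_add_edist (hf : ∀ ⦃u v⦄, G.Adj u v → f v ≤ f u + 1) (u v : V) :
    (f v : ℕ∞) ≤ f u + G.edist u v := by
  by_cases htop : G.edist u v = ⊤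
  · simp [htop]
  obtain ⟨p, hp⟩ := exists_walk_of_edist_ne_top htop
  rw [← hp]
  exact_mod_cast p.apply_le_apply_add_length hf

theorem edist_le_of_forall_exists_adj_lt {c : V}
    (hf : ∀ v, v ≠ c → ∃ w, G.Adj v w ∧ f w < f v) (v : V) : G.edist v c ≤ f v := by
  induction hn : f v using Nat.strong_induction_on generalizing v with
  | _ n ih =>
  by_cases hvc : v = c
  · simp [hvc]
  obtain ⟨w, hvw, hlt⟩ := hf v hvc
  calc G.edist v c ≤ G.edist v w + G.edist w c := G.edist_triangle
    _ ≤ 1 + (f w : ℕ∞) := add_le_add (edist_eq_one_iff_adj.mpr hvw).le (ih _ (hn ▸ hlt) w rfl)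
    _ ≤ n := by norm_cast; omega

end SimpleGraph

theorem Nat.log_two_two_pow_add_of_lt {h j : ℕ} (hj : j < 2 ^ h) : Nat.log 2 (2 ^ h + j) = h :=
  Nat.log_eq_of_pow_le_of_lt_pow (Nat.le_add_right _ _) (by rw [pow_succ]; omega)

namespace GV

variable {h s ℓ : ℕ}

def root (h s ℓ : ℕ) : GV h s ℓ := .t ⟨0, Nat.sub_pos_of_lt (Nat.one_lt_two_pow h.succ_ne_zero)⟩

def depth : GV h s ℓ → ℕ
  | .t m => Nat.log 2 (m.val + 1)
  | .p _ _ => h + 1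
  | .a _ | .b _ => h + 3
  | .ah _ _ | .bh _ _ | .as _ | .bs _ => h + 2

theorem depth_root : (root h s ℓ).depth = 0 := by
  simp [root, depth]

theorem depth_le (v : GV h s ℓ) : v.depth ≤ h + 3 := by
  cases v with
  | t m =>
    have : Nat.log 2 (m.val + 1) < h + 1 := Nat.log_lt_of_lt_pow (by omega) (by omega)
    exact this.le.trans (by omega)
  | _ => simp only [depth]; omega

theorem depth_le_depth_add_one_of_adj0 {u v : GV h s ℓ} (huv : gadgetAdj0 u v) :
    u.depth ≤ v.depth + 1 ∧ v.depth ≤ u.depth + 1 := by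
  cases u <;> cases v <;> simp only [gadgetAdj0, depth] at huv ⊢ <;> try omega
  case t.t m m' =>
    have hpos : 1 ≤ Nat.log 2 (m.val + 1) := Nat.log_pos (by norm_num) (by omega)
    rw [huv.2, Nat.log_div_base]
    omega
  case t.p m _ j =>
    rw [huv, Nat.log_two_two_pow_add_of_lt j.isLt]
    omega

theorem depth_le_depth_add_one_of_adj {u v : GV h s ℓ} (huv : (gadget h s ℓ).Adj u v) :
    v.depth ≤ u.depth + 1 :=
  huv.2.elim (fun h0 => (depth_le_depth_add_one_of_adj0 h0).2)
    (fun h0 => (depth_le_depth_add_one_of_adj0 h0).1)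

theorem exists_adj_depth_lt (hℓ : 1 ≤ ℓ) {v : GV h s ℓ} (hv : v ≠ root h s ℓ) :
    ∃ w, (gadget h s ℓ).Adj v w ∧ w.depth < v.depth := by
  have hleaf : 0 < 2 ^ h := Nat.two_pow_pos h
  have descend {w : GV h s ℓ} (hw : w.depth < v.depth) (hvw : gadgetAdj0 v w ∨ gadgetAdj0 w v) :
      ∃ w, (gadget h s ℓ).Adj v w ∧ w.depth < v.depth :=
    ⟨w, ⟨fun he => by rw [he] at hw; omega, hvw⟩, hw⟩
  cases v with
  | t m =>
    have hm : m.val ≠ 0 := fun h0 => hv (congrArg GV.t (Fin.ext h0))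
    have hpos : 1 ≤ Nat.log 2 (m.val + 1) := Nat.log_pos (by norm_num) (by omega)
    refine descend (w := .t ⟨(m.val + 1) / 2 - 1, by omega⟩) ?_ (.inl ⟨by omega, by simp; omega⟩)
    simp only [depth]
    rw [show (m.val + 1) / 2 - 1 + 1 = (m.val + 1) / 2 by omega, Nat.log_div_base]
    omega
  | p i j =>
    have hj := j.isLt
    refine descend (w := .t ⟨2 ^ h + j.val - 1, by rw [pow_succ]; omega⟩) ?_
      (.inr (by simp [gadgetAdj0]; omega))
    simp only [depth]
    rw [show 2 ^ h + j.val - 1 + 1 = 2 ^ h + j.val by omega, Nat.log_two_two_pow_add_of_lt hj]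
    omega
  | a i => exact descend (w := .as ⟨0, hℓ⟩) (by simp [depth]) (.inl trivial)
  | b i => exact descend (w := .bs ⟨0, hℓ⟩) (by simp [depth]) (.inl trivial)
  | ah z j =>
    exact descend (w := .p ⟨2 * j.val + (if z then 1 else 0), by have := j.isLt; split <;> omega⟩
      ⟨0, hleaf⟩) (by simp [depth]) (.inl ⟨rfl, rfl⟩)
  | bh z j =>
    exact descend (w := .p ⟨2 * j.val + (if z then 0 else 1), by have := j.isLt; split <;> omega⟩
      ⟨2 ^ h - 1, by omega⟩) (by simp [depth]) (.inl ⟨rfl, rfl⟩)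
  | as j =>
    exact descend (w := .p ⟨2 * s + j.val, by omega⟩ ⟨0, hleaf⟩) (by simp [depth])
      (.inl ⟨rfl, rfl⟩)
  | bs j =>
    exact descend (w := .p ⟨2 * s + j.val, by omega⟩ ⟨2 ^ h - 1, by omega⟩) (by simp [depth])
      (.inl ⟨rfl, rfl⟩)

theorem edist_root (hℓ : 1 ≤ ℓ) (v : GV h s ℓ) :
    (gadget h s ℓ).edist (root h s ℓ) v = v.depth :=
  le_antisymm
    (SimpleGraph.edist_comm ▸
      SimpleGraph.edist_le_of_forall_exists_adj_lt (fun _ => exists_adj_depth_lt hℓ) v)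
    (by
      simpa [depth_root] using SimpleGraph.apply_le_apply_add_edist
        (fun _ _ => depth_le_depth_add_one_of_adj) (root h s ℓ) v)

theorem eccent_root (hℓ : 1 ≤ ℓ) : (gadget h s ℓ).eccent (root h s ℓ) = (h + 3 : ℕ) := by
  refine le_antisymm ((SimpleGraph.eccent_le_iff _ _).mpr fun v => ?_) ?_
  · rw [edist_root hℓ]
    exact_mod_cast depth_le v
  · calc ((h + 3 : ℕ) : ℕ∞) = (gadget h s ℓ).edist (root h s ℓ) (.a ⟨0, Nat.two_pow_pos s⟩) := by
          rw [edist_root hℓ]; rfl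
      _ ≤ _ := SimpleGraph.edist_le_eccent

end GV

theorem stmt15_general (h s ℓ : ℕ) (hℓ : 1 ≤ ℓ) :
    h ≤ (gadget h s ℓ).diam ∧ (gadget h s ℓ).diam ≤ 2 * h + 6 := by
  have hecc := GV.eccent_root (h := h) (s := s) hℓ
  have hupper : (gadget h s ℓ).ediam ≤ ((2 * h + 6 : ℕ) : ℕ∞) :=
    ((gadget h s ℓ).ediam_le_two_mul_eccent _).trans (by rw [hecc]; norm_cast)
  have hlower : ((h + 3 : ℕ) : ℕ∞) ≤ (gadget h s ℓ).ediam := hecc ▸ SimpleGraph.eccent_le_ediam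
  obtain ⟨d, hd⟩ := ENat.ne_top_iff_exists.mp (ne_top_of_le_ne_top (ENat.natCast_ne_top _) hupper)
  rw [← hd] at hupper hlower
  have hdiam : (gadget h s ℓ).diam = d := by rw [SimpleGraph.diam, ← hd, ENat.toNat_natCast]
  norm_cast at hupper hlower
  omega

/-- The unweighted diameter `D_G` of the underlying graph `G` of the
diameter gadget satisfies `h ≤ D_G ≤ 2h + 6`. -/
theorem stmt15 (h s ℓ : ℕ) (hh : 1 ≤ h) (hs : 1 ≤ s) (hℓ : 1 ≤ ℓ) :
    h ≤ (gadget h s ℓ).diam ∧ (gadget h s ℓ).diam ≤ 2 * h + 6 :=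
  stmt15_general h s ℓ hℓ
end
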